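/- Let G = (V,∼) be a finite graph with Dirichlet energy D(f) = ∑_{w∼v}(f(w)−f(v))². Let I, J be finite nonempty index sets, (A_i)_{i∈I} and (B_j)_{j∈J} subsets of V, and suppose for each (i,j) ∈ I×J there is f_{i,j} : V → [0,1] with f_{i,j}|_{A_i} = 1 and f_{i,j}|_{B_j} = 0. Define g(x) = max_{i∈I} min_{j∈J} f_{i,j}(x). Then g|_{⋃_i A_i} = 1, g|_{⋃_j B_j} = 0, 0 ≤ g ≤ 1, and D(g) ≤ ∑_{i∈I}∑_{j∈J} D(f_{i,j}). -/
import Mathlib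


open Classical in
/-- The unweighted graph Dirichlet energy (sum over unordered edges). -/
noncomputable def graphEnergy {V : Type*} [Fintype V] (G : SimpleGraph V) (f : V → ℝ) : ℝ :=
  (∑ p : V × V, if G.Adj p.1 p.2 then (f p.1 - f p.2) ^ 2 else 0) / 2

private lemma abs_sup'_sub_sup' {ι : Type*} [Fintype ι] [Nonempty ι] (u v : ι → ℝ) :
    |Finset.univ.sup' Finset.univ_nonempty u - Finset.univ.sup' Finset.univ_nonempty v| ≤
      Finset.univ.sup' Finset.univ_nonempty (fun i => |u i - v i|) := by
  rw [abs_sub_le_iff]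
  constructor
  · obtain ⟨i, -, hi⟩ := Finset.exists_mem_eq_sup' Finset.univ_nonempty u
    rw [hi]
    have h1 : u i - v i ≤ |u i - v i| := le_abs_self _
    have h2 : v i ≤ Finset.univ.sup' Finset.univ_nonempty v := Finset.le_sup' _ (Finset.mem_univ i)
    have h3 : |u i - v i| ≤ Finset.univ.sup' Finset.univ_nonempty (fun i => |u i - v i|) :=
      Finset.le_sup' (fun i => |u i - v i|) (Finset.mem_univ i)
    linarith
  · obtain ⟨i, -, hi⟩ := Finset.exists_mem_eq_sup' Finset.univ_nonempty v
    rw [hi]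
    have h1 : v i - u i ≤ |u i - v i| := by rw [abs_sub_comm]; exact le_abs_self _
    have h2 : u i ≤ Finset.univ.sup' Finset.univ_nonempty u := Finset.le_sup' _ (Finset.mem_univ i)
    have h3 : |u i - v i| ≤ Finset.univ.sup' Finset.univ_nonempty (fun i => |u i - v i|) :=
      Finset.le_sup' (fun i => |u i - v i|) (Finset.mem_univ i)
    linarith

private lemma abs_inf'_sub_inf' {ι : Type*} [Fintype ι] [Nonempty ι] (u v : ι → ℝ) :
    |Finset.univ.inf' Finset.univ_nonempty u - Finset.univ.inf' Finset.univ_nonempty v| ≤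
      Finset.univ.sup' Finset.univ_nonempty (fun i => |u i - v i|) := by
  rw [abs_sub_le_iff]
  constructor
  · obtain ⟨i, -, hi⟩ := Finset.exists_mem_eq_inf' Finset.univ_nonempty v
    rw [hi]
    have h1 : u i - v i ≤ |u i - v i| := le_abs_self _
    have h2 : Finset.univ.inf' Finset.univ_nonempty u ≤ u i := Finset.inf'_le _ (Finset.mem_univ i)
    have h3 : |u i - v i| ≤ Finset.univ.sup' Finset.univ_nonempty (fun i => |u i - v i|) :=
      Finset.le_sup' (fun i => |u i - v i|) (Finset.mem_univ i)
    linarith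
  · obtain ⟨i, -, hi⟩ := Finset.exists_mem_eq_inf' Finset.univ_nonempty u
    rw [hi]
    have h1 : v i - u i ≤ |u i - v i| := by rw [abs_sub_comm]; exact le_abs_self _
    have h2 : Finset.univ.inf' Finset.univ_nonempty v ≤ v i := Finset.inf'_le _ (Finset.mem_univ i)
    have h3 : |u i - v i| ≤ Finset.univ.sup' Finset.univ_nonempty (fun i => |u i - v i|) :=
      Finset.le_sup' (fun i => |u i - v i|) (Finset.mem_univ i)
    linarith

theorem maxmin_gluing {V ι κ : Type*} [Fintype V] [Fintype ι] [Fintype κ]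
    [Nonempty ι] [Nonempty κ] (G : SimpleGraph V)
    (A : ι → Set V) (B : κ → Set V) (f : ι → κ → V → ℝ)
    (hrange : ∀ i j x, f i j x ∈ Set.Icc (0:ℝ) 1)
    (hA : ∀ i j, ∀ x ∈ A i, f i j x = 1)
    (hB : ∀ i j, ∀ x ∈ B j, f i j x = 0)
    (g : V → ℝ) (hg : ∀ x, g x = ⨆ i, ⨅ j, f i j x) :
    (∀ x ∈ ⋃ i, A i, g x = 1) ∧ (∀ x ∈ ⋃ j, B j, g x = 0) ∧
    (∀ x, g x ∈ Set.Icc (0:ℝ) 1) ∧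
    graphEnergy G g ≤ ∑ i : ι, ∑ j : κ, graphEnergy G (f i j) := by
  classical
  -- rewrite g in sup'/inf' form
  have hg' : ∀ x, g x = Finset.univ.sup' Finset.univ_nonempty
      (fun i => Finset.univ.inf' Finset.univ_nonempty (fun j => f i j x)) := by
    intro x
    rw [hg x]
    rw [Finset.sup'_univ_eq_ciSup]
    congr 1
    ext i
    rw [Finset.inf'_univ_eq_ciInf]
  have hgA : ∀ x ∈ ⋃ i, A i, g x = 1 := by
    intro x hx
    obtain ⟨i, hi⟩ := Set.mem_iUnion.mp hx
    rw [hg' x]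
    apply le_antisymm
    · apply Finset.sup'_le
      intro i' _
      apply Finset.inf'_le_of_le _ (Finset.mem_univ (Classical.arbitrary κ))
      exact (hrange i' _ x).2
    · apply Finset.le_sup'_of_le _ (Finset.mem_univ i)
      apply Finset.le_inf'
      intro j _
      rw [hA i j x hi]
  have hgB : ∀ x ∈ ⋃ j, B j, g x = 0 := by
    intro x hx
    obtain ⟨j, hj⟩ := Set.mem_iUnion.mp hx
    rw [hg' x]
    apply le_antisymm
    · apply Finset.sup'_le
      intro i' _
      apply Finset.inf'_le_of_le _ (Finset.mem_univ j)
      rw [hB i' j x hj]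
    · apply Finset.le_sup'_of_le _ (Finset.mem_univ (Classical.arbitrary ι))
      apply Finset.le_inf'
      intro j' _
      exact (hrange _ j' x).1
  have hgIcc : ∀ x, g x ∈ Set.Icc (0:ℝ) 1 := by
    intro x
    rw [hg' x]
    constructor
    · apply Finset.le_sup'_of_le _ (Finset.mem_univ (Classical.arbitrary ι))
      apply Finset.le_inf'
      intro j' _
      exact (hrange _ j' x).1
    · apply Finset.sup'_le
      intro i' _
      apply Finset.inf'_le_of_le _ (Finset.mem_univ (Classical.arbitrary κ))
      exact (hrange i' _ x).2
  refine ⟨hgA, hgB, hgIcc, ?_⟩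
  -- key pointwise bound
  have key : ∀ x y : V, (g x - g y) ^ 2 ≤ ∑ i : ι, ∑ j : κ, (f i j x - f i j y) ^ 2 := by
    intro x y
    have h1 : |g x - g y| ≤ Finset.univ.sup' Finset.univ_nonempty
        (fun i => |Finset.univ.inf' Finset.univ_nonempty (fun j => f i j x) -
          Finset.univ.inf' Finset.univ_nonempty (fun j => f i j y)|) := by
      rw [hg' x, hg' y]
      exact abs_sup'_sub_sup' _ _
    obtain ⟨i, -, hi⟩ := Finset.exists_mem_eq_sup' Finset.univ_nonempty
        (fun i => |Finset.univ.inf' Finset.univ_nonempty (fun j => f i j x) -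
          Finset.univ.inf' Finset.univ_nonempty (fun j => f i j y)|)
    rw [hi] at h1
    have h2 := abs_inf'_sub_inf' (fun j => f i j x) (fun j => f i j y)
    obtain ⟨j, -, hj⟩ := Finset.exists_mem_eq_sup' Finset.univ_nonempty
        (fun j => |f i j x - f i j y|)
    rw [hj] at h2
    have h3 : |g x - g y| ≤ |f i j x - f i j y| := h1.trans h2
    have h4 : (g x - g y) ^ 2 ≤ (f i j x - f i j y) ^ 2 := by
      rw [← sq_abs (g x - g y), ← sq_abs (f i j x - f i j y)]
      exact pow_le_pow_left₀ (abs_nonneg _) h3 2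
    refine h4.trans ?_
    calc (f i j x - f i j y) ^ 2
        ≤ ∑ j' : κ, (f i j' x - f i j' y) ^ 2 :=
          Finset.single_le_sum (f := fun j' => (f i j' x - f i j' y) ^ 2)
            (fun j' _ => sq_nonneg _) (Finset.mem_univ j)
      _ ≤ ∑ i' : ι, ∑ j' : κ, (f i' j' x - f i' j' y) ^ 2 :=
          Finset.single_le_sum (f := fun i' => ∑ j' : κ, (f i' j' x - f i' j' y) ^ 2)
            (fun i' _ => Finset.sum_nonneg fun j' _ => sq_nonneg _) (Finset.mem_univ i)
  unfold graphEnergy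
  have step : ∑ p : V × V, (if G.Adj p.1 p.2 then (g p.1 - g p.2) ^ 2 else 0) ≤
      ∑ i : ι, ∑ j : κ, ∑ p : V × V,
        (if G.Adj p.1 p.2 then (f i j p.1 - f i j p.2) ^ 2 else 0) := by
    have h1 : ∀ p : V × V, (if G.Adj p.1 p.2 then (g p.1 - g p.2) ^ 2 else 0) ≤
        ∑ i : ι, ∑ j : κ, (if G.Adj p.1 p.2 then (f i j p.1 - f i j p.2) ^ 2 else 0) := by
      intro p
      by_cases h : G.Adj p.1 p.2 <;> simp [h]
      exact key p.1 p.2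
    refine (Finset.sum_le_sum fun p _ => h1 p).trans_eq ?_
    rw [Finset.sum_comm]
    refine Finset.sum_congr rfl fun i _ => ?_
    rw [Finset.sum_comm]
  simp only [← Finset.sum_div]
  linarith [step]
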